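/- arXiv:math/0608679 — 2 statements merged into one kernel-verified Lean document; each statement's English description precedes it below -/
import Mathlib

section
/- In the quantum affine space with generators T_{i,α} (1 ≤ i, α ≤ n) and relations T_{i,β}T_{i,α} = q^{-1} T_{i,α}T_{i,β} for α < β, T_{j,α}T_{i,α} = q^{-1} T_{i,α}T_{j,α} for i < j, and T_{j,β}T_{i,α} = T_{i,α}T_{j,β} when i ≠ j and α ≠ β, the element Δ_n := T_{1,1}T_{2,2}···T_{n,n} is central. -/
/-- in the quantum affine space with generators `T i α`
(`1 ≤ i, α ≤ n`) and relations `T i β * T i α = q⁻¹ • (T i α * T i β)` for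
`α < β`, `T j α * T i α = q⁻¹ • (T i α * T j α)` for `i < j`, and
`T j β * T i α = T i α * T j β` for `i ≠ j`, `α ≠ β`, the element
`Δₙ = T 1 1 * T 2 2 * ⋯ * T n n` is central. -/
theorem quantum_affine_detq_central (K : Type*) [Field K] (q : K) (hq : q ≠ 0)
    (n : ℕ) (hn : 2 ≤ n)
    (A : Type*) [Ring A] [Algebra K A]
    (T : ℕ → ℕ → A)
    (hrow : ∀ i α β, 1 ≤ i → i ≤ n → 1 ≤ α → α < β → β ≤ n →
      T i β * T i α = q⁻¹ • (T i α * T i β))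
    (hcol : ∀ i j α, 1 ≤ i → i < j → j ≤ n → 1 ≤ α → α ≤ n →
      T j α * T i α = q⁻¹ • (T i α * T j α))
    (hcomm : ∀ i j α β, 1 ≤ i → i ≤ n → 1 ≤ j → j ≤ n → 1 ≤ α → α ≤ n →
      1 ≤ β → β ≤ n → i ≠ j → α ≠ β → T j β * T i α = T i α * T j β)
    -- the quantum affine space is generated by the `T i α`
    (hgen : Algebra.adjoin K
      {x : A | ∃ i α, 1 ≤ i ∧ i ≤ n ∧ 1 ≤ α ∧ α ≤ n ∧ x = T i α} = ⊤) :
    ((List.range n).map (fun k => T (k + 1) (k + 1))).prod ∈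
      Subalgebra.center K A := by
  set P : ℕ → A := fun m => ((List.range m).map (fun k => T (k + 1) (k + 1))).prod with hP
  have hPsucc : ∀ m, P (m + 1) = P m * T (m + 1) (m + 1) := by
    intro m
    simp [hP, List.range_succ]
  -- key commutation with each generator
  have key : ∀ j β, 1 ≤ j → j ≤ n → 1 ≤ β → β ≤ n → T j β * P n = P n * T j β := by
    intro j β hj1 hjn hb1 hbn
    by_cases hjb : j = β
    · subst hjb
      -- every factor commutes with T j j
      have : ∀ x ∈ (List.range n).map (fun k => T (k + 1) (k + 1)),
          Commute (T j j) x := by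
        intro x hx
        simp only [List.mem_map, List.mem_range] at hx
        obtain ⟨k, hk, rfl⟩ := hx
        by_cases hkj : k + 1 = j
        · rw [hkj]
        · exact hcomm (k + 1) j (k + 1) j (by omega) (by omega) hj1 hjn (by omega)
            (by omega) hj1 hjn hkj hkj
      exact Commute.list_prod_right _ _ this
    · -- j ≠ β : track the scalar
      have main : ∀ m, m ≤ n →
          T j β * P m = ((if j ≤ m then (if j < β then q⁻¹ else q) else 1)
            * (if β ≤ m then (if j < β then q else q⁻¹) else 1)) • (P m * T j β) := by
        intro m
        induction m with
        | zero =>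
          intro _
          rw [if_neg (by omega : ¬ j ≤ 0), if_neg (by omega : ¬ β ≤ 0)]
          simp [hP]
        | succ m ih =>
          intro hm
          have ihm := ih (by omega)
          set i := m + 1 with hi
          -- factor for the new term
          have hfac : ∃ f : K, T j β * T i i = f • (T i i * T j β) ∧
              ((if j ≤ m then (if j < β then q⁻¹ else q) else 1)
                * (if β ≤ m then (if j < β then q else q⁻¹) else 1)) * f
              = ((if j ≤ m + 1 then (if j < β then q⁻¹ else q) else 1)
                * (if β ≤ m + 1 then (if j < β then q else q⁻¹) else 1)) := by
            by_cases hij : i = j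
            · -- new factor is T j j
              refine ⟨(if j < β then q⁻¹ else q), ?_, ?_⟩
              · rw [hij]
                by_cases hlt : j < β
                · rw [if_pos hlt]
                  exact hrow j j β hj1 hjn hj1 hlt hbn
                · have h := hrow j β j hj1 hjn hb1 (by omega) hjn
                  have h2 : q • (T j j * T j β) = q • (q⁻¹ • (T j β * T j j)) := by
                    rw [h]
                  rw [smul_inv_smul₀ hq] at h2
                  rw [if_neg hlt]
                  exact h2.symm
              · have h1 : ¬ j ≤ m := by omega
                have h2 : j ≤ m + 1 := by omega
                by_cases hb : β ≤ m
                · rw [if_neg h1, if_pos h2, if_pos hb, if_pos (by omega : β ≤ m + 1)]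
                  ring
                · rw [if_neg h1, if_pos h2, if_neg hb, if_neg (by omega : ¬ β ≤ m + 1)]
                  ring
            · by_cases hib : i = β
              · -- new factor is T β β
                refine ⟨(if j < β then q else q⁻¹), ?_, ?_⟩
                · rw [hib]
                  by_cases hlt : j < β
                  · have h := hcol j β β hj1 hlt hbn hb1 hbn
                    have h2 : q • (T β β * T j β) = q • (q⁻¹ • (T j β * T β β)) := by
                      rw [h]
                    rw [smul_inv_smul₀ hq] at h2
                    rw [if_pos hlt]
                    exact h2.symm
                  · rw [if_neg hlt]
                    exact hcol β j β hb1 (by omega) hjn hb1 hbn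
                · have h1 : ¬ β ≤ m := by omega
                  have h2 : β ≤ m + 1 := by omega
                  by_cases hjm : j ≤ m
                  · rw [if_neg h1, if_pos h2, if_pos hjm, if_pos (by omega : j ≤ m + 1)]
                    ring
                  · rw [if_neg h1, if_pos h2, if_neg hjm, if_neg (by omega : ¬ j ≤ m + 1)]
                    ring
              · refine ⟨1, ?_, ?_⟩
                · rw [one_smul]
                  exact hcomm i j i β (by omega) (by omega) hj1 hjn (by omega) (by omega)
                    hb1 hbn hij hib
                · have e1 : (j ≤ m + 1) ↔ (j ≤ m) := by omega
                  have e2 : (β ≤ m + 1) ↔ (β ≤ m) := by omega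
                  simp only [e1, e2, mul_one]
          obtain ⟨f, hf1, hf2⟩ := hfac
          calc T j β * P (m + 1) = (T j β * P m) * T i i := by rw [hPsucc, mul_assoc]
            _ = ((if j ≤ m then (if j < β then q⁻¹ else q) else 1)
                  * (if β ≤ m then (if j < β then q else q⁻¹) else 1))
                • (P m * (T j β * T i i)) := by rw [ihm, smul_mul_assoc, mul_assoc]
            _ = ((if j ≤ m then (if j < β then q⁻¹ else q) else 1)
                  * (if β ≤ m then (if j < β then q else q⁻¹) else 1))
                • (f • (P m * (T i i * T j β))) := by rw [hf1, mul_smul_comm]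
            _ = ((if j ≤ m + 1 then (if j < β then q⁻¹ else q) else 1)
                  * (if β ≤ m + 1 then (if j < β then q else q⁻¹) else 1))
                • (P (m + 1) * T j β) := by
                  rw [smul_smul, hf2, hPsucc, mul_assoc]
      have h := main n le_rfl
      rw [if_pos hjn, if_pos hbn] at h
      by_cases hlt : j < β
      · rwa [if_pos hlt, if_pos hlt, inv_mul_cancel₀ hq, one_smul] at h
      · rwa [if_neg hlt, if_neg hlt, mul_inv_cancel₀ hq, one_smul] at h
  -- conclude via generation
  rw [Subalgebra.mem_center_iff]
  intro a
  have ha : a ∈ Algebra.adjoin K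
      {x : A | ∃ i α, 1 ≤ i ∧ i ≤ n ∧ 1 ≤ α ∧ α ≤ n ∧ x = T i α} := by
    rw [hgen]; exact Algebra.mem_top
  induction ha using Algebra.adjoin_induction with
  | mem x hx =>
    obtain ⟨i, α, h1, h2, h3, h4, rfl⟩ := hx
    exact key i α h1 h2 h3 h4
  | algebraMap r =>
    rw [Algebra.commutes]
  | add x y _ _ hx hy =>
    rw [add_mul, mul_add, hx, hy]
  | mul x y _ _ hx hy =>
    rw [mul_assoc, hy, ← mul_assoc, hx, mul_assoc]
end

section
/- In the quantum torus P(Λ) obtained from the quantum affine space on generators T_{i,α} (1 ≤ i, α ≤ n) by inverting all generators, each element Δ_i := (T_{1,n-i+1}T_{2,n-i+2}···T_{i,n})·(T_{i+1,1}T_{i+2,2}···T_{n,n-i})^{-1} (for 1 ≤ i ≤ n-1) is central. -/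
/-- weight picked up when commuting `T j β` past `T r c`. -/
def wgt {K : Type*} [Field K] (q : K) (j β r c : ℕ) : K :=
  if r = j then (if β < c then q else if c < β then q⁻¹ else 1)
  else if c = β then (if j < r then q else q⁻¹) else 1

lemma wgt_one {K : Type*} [Field K] (q : K) (j β r c : ℕ) (hr : r ≠ j) (hc : c ≠ β) :
    wgt q j β r c = 1 := by simp [wgt, hr, hc]

lemma wgt_ne_zero {K : Type*} [Field K] {q : K} (hq : q ≠ 0) (j β r c : ℕ) :
    wgt q j β r c ≠ 0 := by
  unfold wgt; split_ifs <;> simp [hq]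

lemma conj_list_prod {K A : Type*} [Field K] [Ring A] [Algebra K A]
    (g : A) (F : ℕ → A) (w : ℕ → K) (m : ℕ)
    (h : ∀ k, k < m → g * F k = w k • (F k * g)) :
    g * ((List.range m).map F).prod =
      (∏ k ∈ Finset.range m, w k) • (((List.range m).map F).prod * g) := by
  induction m with
  | zero => simp
  | succ m ih =>
    rw [List.range_succ, List.map_append, List.prod_append]
    simp only [List.map_cons, List.map_nil, List.prod_cons, List.prod_nil, mul_one]
    rw [← mul_assoc, ih (fun k hk => h k (by omega)), smul_mul_assoc, mul_assoc,
      h m (by omega), mul_smul_comm, smul_smul, ← Finset.prod_range_succ, ← mul_assoc]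

lemma tconj_inv {K A : Type*} [Field K] [Ring A] [Algebra K A]
    (g t s : A) (c : K) (hc : c ≠ 0) (hts : t * s = 1) (hst : s * t = 1)
    (h : g * t = c • (t * g)) : g * s = c⁻¹ • (s * g) := by
  have h2 : s * g = c • (g * s) := by
    have e : s * ((g * t) * s) = s * g := by rw [mul_assoc g t s, hts, mul_one]
    rw [← e, h, smul_mul_assoc, mul_smul_comm]
    congr 1
    rw [← mul_assoc, ← mul_assoc, hst, one_mul]
  rw [h2, smul_smul, inv_mul_cancel₀ hc, one_smul]

lemma prod_pair {M : Type*} [CommMonoid M] (f : ℕ → M) (m a b : ℕ)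
    (hab : a ≠ b) (ha : a < m) (hb : b < m)
    (h : ∀ k, k < m → k ≠ a → k ≠ b → f k = 1) :
    ∏ k ∈ Finset.range m, f k = f a * f b := by
  rw [← Finset.mul_prod_erase _ f (Finset.mem_range.2 ha),
      ← Finset.mul_prod_erase _ f
        (Finset.mem_erase.2 ⟨hab.symm, Finset.mem_range.2 hb⟩),
      Finset.prod_eq_one, mul_one]
  intro k hk
  simp only [Finset.mem_erase, Finset.mem_range] at hk
  exact h k hk.2.2 hk.2.1 hk.1

/-- in the quantum torus `P(Λ)` obtained from the quantum affine
space on generators `T i α` (`1 ≤ i, α ≤ n`) by inverting all generators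
(with `S i α` the inverse of `T i α`), each element
`Δᵢ = (T 1 (n-i+1) ⋯ T i n) * (T (i+1) 1 ⋯ T n (n-i))⁻¹` (for `1 ≤ i ≤ n-1`)
is central. -/
theorem quantum_torus_Delta_central (K : Type*) [Field K] [CharZero K] (q : K)
    (hq : q ≠ 0) (hroot : ∀ k : ℕ, 0 < k → q ^ k ≠ 1)
    (n : ℕ) (hn : 2 ≤ n)
    (A : Type*) [Ring A] [Algebra K A]
    (T S : ℕ → ℕ → A)
    (hinv : ∀ i α, 1 ≤ i → i ≤ n → 1 ≤ α → α ≤ n →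
      T i α * S i α = 1 ∧ S i α * T i α = 1)
    (hrow : ∀ i α β, 1 ≤ i → i ≤ n → 1 ≤ α → α < β → β ≤ n →
      T i β * T i α = q⁻¹ • (T i α * T i β))
    (hcol : ∀ i j α, 1 ≤ i → i < j → j ≤ n → 1 ≤ α → α ≤ n →
      T j α * T i α = q⁻¹ • (T i α * T j α))
    (hcomm : ∀ i j α β, 1 ≤ i → i ≤ n → 1 ≤ j → j ≤ n → 1 ≤ α → α ≤ n →
      1 ≤ β → β ≤ n → i ≠ j → α ≠ β → T j β * T i α = T i α * T j β)
    -- `P(Λ)` is generated by the `T i α` together with their inverses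
    (hgen : Algebra.adjoin K
      {x : A | ∃ i α, 1 ≤ i ∧ i ≤ n ∧ 1 ≤ α ∧ α ≤ n ∧ (x = T i α ∨ x = S i α)} = ⊤) :
    ∀ i : ℕ, 1 ≤ i → i ≤ n - 1 →
      (((List.range i).map (fun k => T (k + 1) (n - i + k + 1))).prod *
       ((List.range (n - i)).map (fun k => S (n - k) (n - i - k))).prod) ∈
        Subalgebra.center K A := by
  intro i hi1 hi2
  have hin : i < n := by omega
  set D : A := (((List.range i).map (fun k => T (k + 1) (n - i + k + 1))).prod *
       ((List.range (n - i)).map (fun k => S (n - k) (n - i - k))).prod) with hD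
  have hkeyT : ∀ j β, 1 ≤ j → j ≤ n → 1 ≤ β → β ≤ n →
      T j β * D = D * T j β := by
    intro j β hj1 hjn hb1 hbn
    have hswap : ∀ r c, 1 ≤ r → r ≤ n → 1 ≤ c → c ≤ n →
        T j β * T r c = wgt q j β r c • (T r c * T j β) := by
      intro r c hr1 hrn hc1 hcn
      by_cases hr : r = j
      · subst hr
        rcases lt_trichotomy β c with h | h | h
        · rw [wgt, if_pos rfl, if_pos h]
          rw [hrow r β c hr1 hrn hb1 h hcn, smul_smul, mul_inv_cancel₀ hq, one_smul]
        · subst h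
          rw [wgt, if_pos rfl, if_neg (lt_irrefl _), if_neg (lt_irrefl _), one_smul]
        · rw [wgt, if_pos rfl, if_neg (by omega), if_pos h]
          exact hrow r c β hr1 hrn hc1 h hbn
      · by_cases hc : c = β
        · subst hc
          rcases lt_trichotomy j r with h | h | h
          · rw [wgt, if_neg hr, if_pos rfl, if_pos h]
            rw [hcol j r c hj1 h hrn hc1 hcn, smul_smul, mul_inv_cancel₀ hq, one_smul]
          · omega
          · rw [wgt, if_neg hr, if_pos rfl, if_neg (by omega)]
            exact hcol r j c hr1 h hjn hc1 hcn
        · rw [wgt_one q j β r c hr hc, one_smul]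
          exact hcomm r j c β hr1 hrn hj1 hjn hc1 hcn hb1 hbn hr hc
    have hswapS : ∀ r c, 1 ≤ r → r ≤ n → 1 ≤ c → c ≤ n →
        T j β * S r c = (wgt q j β r c)⁻¹ • (S r c * T j β) := by
      intro r c hr1 hrn hc1 hcn
      obtain ⟨hts, hst⟩ := hinv r c hr1 hrn hc1 hcn
      exact tconj_inv _ _ _ _ (wgt_ne_zero hq j β r c) hts hst
        (hswap r c hr1 hrn hc1 hcn)
    have hA := conj_list_prod (T j β) (fun k => T (k + 1) (n - i + k + 1))
      (fun k => wgt q j β (k + 1) (n - i + k + 1)) i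
      (fun k hk => hswap _ _ (by omega) (by omega) (by omega) (by omega))
    have hB := conj_list_prod (T j β) (fun k => S (n - k) (n - i - k))
      (fun k => (wgt q j β (n - k) (n - i - k))⁻¹) (n - i)
      (fun k hk => hswapS _ _ (by omega) (by omega) (by omega) (by omega))
    have hmain : (∏ k ∈ Finset.range i, wgt q j β (k + 1) (n - i + k + 1)) =
        ∏ k ∈ Finset.range (n - i), wgt q j β (n - k) (n - i - k) := by
      rcases le_or_gt j i with hji | hji <;> rcases le_or_gt β (n - i) with hbi | hbi
      · -- j ≤ i, β ≤ n - i : both sides equal q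
        have hL : (∏ k ∈ Finset.range i, wgt q j β (k + 1) (n - i + k + 1)) = q := by
          rw [Finset.prod_eq_single_of_mem (j - 1) (Finset.mem_range.2 (by omega))
            (fun b hb hbne => wgt_one q j β _ _ (by omega) (by omega))]
          show wgt q j β (j - 1 + 1) (n - i + (j - 1) + 1) = q
          rw [show j - 1 + 1 = j from by omega,
            show n - i + (j - 1) + 1 = n - i + j from by omega]
          unfold wgt; split_ifs <;> first | rfl | (exfalso; omega)
        have hR : (∏ k ∈ Finset.range (n - i), wgt q j β (n - k) (n - i - k)) = q := by
          rw [Finset.prod_eq_single_of_mem (n - i - β) (Finset.mem_range.2 (by omega))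
            (fun b hb hbne => wgt_one q j β _ _
              (by simp only [Finset.mem_range] at hb; omega) (by omega))]
          show wgt q j β (n - (n - i - β)) (n - i - (n - i - β)) = q
          rw [show n - (n - i - β) = i + β from by omega,
            show n - i - (n - i - β) = β from by omega]
          unfold wgt; split_ifs <;> first | rfl | (exfalso; omega)
        rw [hL, hR]
      · -- j ≤ i, n - i < β : both sides equal 1
        have hR : (∏ k ∈ Finset.range (n - i), wgt q j β (n - k) (n - i - k)) = 1 :=
          Finset.prod_eq_one (fun k hk => wgt_one q j β _ _
            (by simp only [Finset.mem_range] at hk; omega) (by omega))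
        rw [hR]
        rcases lt_trichotomy β (n - i + j) with hb2 | hb2 | hb2
        · rw [prod_pair _ i (j - 1) (β - (n - i) - 1) (by omega) (by omega) (by omega)
            (fun k hk hk1 hk2 => wgt_one q j β _ _ (by omega) (by omega))]
          rw [show j - 1 + 1 = j from by omega,
            show n - i + (j - 1) + 1 = n - i + j from by omega,
            show β - (n - i) - 1 + 1 = β - (n - i) from by omega,
            show n - i + (β - (n - i) - 1) + 1 = β from by omega]
          unfold wgt
          split_ifs <;> first | (exfalso; omega) | exact mul_inv_cancel₀ hq |
            exact inv_mul_cancel₀ hq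
        · rw [Finset.prod_eq_single_of_mem (j - 1) (Finset.mem_range.2 (by omega))
            (fun b hb hbne => wgt_one q j β _ _ (by omega) (by omega))]
          show wgt q j β (j - 1 + 1) (n - i + (j - 1) + 1) = 1
          rw [show j - 1 + 1 = j from by omega,
            show n - i + (j - 1) + 1 = n - i + j from by omega]
          unfold wgt; split_ifs <;> first | rfl | (exfalso; omega)
        · rw [prod_pair _ i (j - 1) (β - (n - i) - 1) (by omega) (by omega) (by omega)
            (fun k hk hk1 hk2 => wgt_one q j β _ _ (by omega) (by omega))]
          rw [show j - 1 + 1 = j from by omega,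
            show n - i + (j - 1) + 1 = n - i + j from by omega,
            show β - (n - i) - 1 + 1 = β - (n - i) from by omega,
            show n - i + (β - (n - i) - 1) + 1 = β from by omega]
          unfold wgt
          split_ifs <;> first | (exfalso; omega) | exact mul_inv_cancel₀ hq |
            exact inv_mul_cancel₀ hq
      · -- i < j, β ≤ n - i : both sides equal 1
        have hL : (∏ k ∈ Finset.range i, wgt q j β (k + 1) (n - i + k + 1)) = 1 :=
          Finset.prod_eq_one (fun k hk => wgt_one q j β _ _
            (by simp only [Finset.mem_range] at hk; omega) (by omega))
        rw [hL]
        symm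
        rcases lt_trichotomy β (j - i) with hb2 | hb2 | hb2
        · rw [prod_pair _ (n - i) (n - j) (n - i - β) (by omega) (by omega) (by omega)
            (fun k hk hk1 hk2 => wgt_one q j β _ _ (by omega) (by omega))]
          rw [show n - (n - j) = j from by omega,
            show n - i - (n - j) = j - i from by omega,
            show n - (n - i - β) = i + β from by omega,
            show n - i - (n - i - β) = β from by omega]
          unfold wgt
          split_ifs <;> first | (exfalso; omega) | exact mul_inv_cancel₀ hq |
            exact inv_mul_cancel₀ hq
        · rw [Finset.prod_eq_single_of_mem (n - j) (Finset.mem_range.2 (by omega))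
            (fun b hb hbne => wgt_one q j β _ _
              (by simp only [Finset.mem_range] at hb; omega)
              (by simp only [Finset.mem_range] at hb; omega))]
          show wgt q j β (n - (n - j)) (n - i - (n - j)) = 1
          rw [show n - (n - j) = j from by omega,
            show n - i - (n - j) = j - i from by omega]
          unfold wgt; split_ifs <;> first | rfl | (exfalso; omega)
        · rw [prod_pair _ (n - i) (n - j) (n - i - β) (by omega) (by omega) (by omega)
            (fun k hk hk1 hk2 => wgt_one q j β _ _ (by omega) (by omega))]
          rw [show n - (n - j) = j from by omega,
            show n - i - (n - j) = j - i from by omega,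
            show n - (n - i - β) = i + β from by omega,
            show n - i - (n - i - β) = β from by omega]
          unfold wgt
          split_ifs <;> first | (exfalso; omega) | exact mul_inv_cancel₀ hq |
            exact inv_mul_cancel₀ hq
      · -- i < j, n - i < β : both sides equal q⁻¹
        have hL : (∏ k ∈ Finset.range i, wgt q j β (k + 1) (n - i + k + 1)) = q⁻¹ := by
          rw [Finset.prod_eq_single_of_mem (β - (n - i) - 1) (Finset.mem_range.2 (by omega))
            (fun b hb hbne => wgt_one q j β _ _
              (by simp only [Finset.mem_range] at hb; omega) (by omega))]
          show wgt q j β (β - (n - i) - 1 + 1) (n - i + (β - (n - i) - 1) + 1) = q⁻¹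
          rw [show β - (n - i) - 1 + 1 = β - (n - i) from by omega,
            show n - i + (β - (n - i) - 1) + 1 = β from by omega]
          unfold wgt; split_ifs <;> first | rfl | (exfalso; omega)
        have hR : (∏ k ∈ Finset.range (n - i), wgt q j β (n - k) (n - i - k)) = q⁻¹ := by
          rw [Finset.prod_eq_single_of_mem (n - j) (Finset.mem_range.2 (by omega))
            (fun b hb hbne => wgt_one q j β _ _
              (by simp only [Finset.mem_range] at hb; omega) (by omega))]
          show wgt q j β (n - (n - j)) (n - i - (n - j)) = q⁻¹
          rw [show n - (n - j) = j from by omega,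
            show n - i - (n - j) = j - i from by omega]
          unfold wgt; split_ifs <;> first | rfl | (exfalso; omega)
        rw [hL, hR]
    have hPBne : (∏ k ∈ Finset.range (n - i), wgt q j β (n - k) (n - i - k)) ≠ 0 :=
      Finset.prod_ne_zero_iff.2 (fun k _ => wgt_ne_zero hq _ _ _ _)
    have hone : (∏ k ∈ Finset.range i, wgt q j β (k + 1) (n - i + k + 1)) *
        (∏ k ∈ Finset.range (n - i), (wgt q j β (n - k) (n - i - k))⁻¹) = 1 := by
      rw [Finset.prod_inv_distrib, hmain, mul_inv_cancel₀ hPBne]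
    rw [hD, ← mul_assoc, hA, smul_mul_assoc, mul_assoc, hB, mul_smul_comm, smul_smul,
      hone, one_smul, mul_assoc]
  have hkeyS : ∀ j β, 1 ≤ j → j ≤ n → 1 ≤ β → β ≤ n →
      S j β * D = D * S j β := by
    intro j β hj1 hjn hb1 hbn
    obtain ⟨hts, hst⟩ := hinv j β hj1 hjn hb1 hbn
    have h := hkeyT j β hj1 hjn hb1 hbn
    have e1 : S j β * ((T j β * D) * S j β) = D * S j β := by
      rw [← mul_assoc, ← mul_assoc, hst, one_mul]
    have e2 : S j β * ((T j β * D) * S j β) = S j β * D := by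
      rw [h, mul_assoc, hts, mul_one]
    exact e2.symm.trans e1
  rw [Subalgebra.mem_center_iff]
  intro b
  have hle : Algebra.adjoin K
      {x : A | ∃ i α, 1 ≤ i ∧ i ≤ n ∧ 1 ≤ α ∧ α ≤ n ∧ (x = T i α ∨ x = S i α)} ≤
      Subalgebra.centralizer K ({D} : Set A) := by
    apply Algebra.adjoin_le
    rintro x ⟨j', α', h1, h2, h3, h4, (rfl | rfl)⟩ <;>
      · simp only [SetLike.mem_coe]
        rw [Subalgebra.mem_centralizer_iff]
        rintro g hg
        rw [Set.mem_singleton_iff] at hg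
        subst hg
        first
        | exact (hkeyT j' α' h1 h2 h3 h4).symm
        | exact (hkeyS j' α' h1 h2 h3 h4).symm
  rw [hgen] at hle
  have hb := hle (show b ∈ (⊤ : Subalgebra K A) from trivial)
  rw [Subalgebra.mem_centralizer_iff] at hb
  exact (hb D rfl).symm
end
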